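/- arXiv:1605.05716 — 5 statements merged into one kernel-verified Lean document; each statement's English description precedes it below -/
import Mathlib

section
/- Let ω = exp(2πi/3), E = ℤ[ω] ⊆ ℂ, Θ a prime element of E, π : E → E/(Θ) the quotient map, and let s : E/(Θ) → E be any section of π (i.e., π ∘ s = id), applied entrywise to matrices. Then for any two matrices X, Y ∈ (E/(Θ))^{m×n} we have rank_ℂ(s(X) − s(Y)) ≥ rank_{E/(Θ)}(X − Y). In particular, if 𝒞 ⊆ (E/(Θ))^{m×n} is a rank-metric code of minimum rank distance d, then any two distinct matrices in the image s(𝒞) ⊆ ℂ^{m×n} have rank distance at least d over ℂ, i.e., the embedding s is minimum-rank-distance preserving. -/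
open Matrix Module Submodule

/-- Choose rank-many linearly independent columns of a matrix over a field. -/
private lemma exists_indep_cols {F : Type*} [Field F] {m n : ℕ}
    (M : Matrix (Fin m) (Fin n) F) {k : ℕ} (hk : M.rank = k) :
    ∃ γ : Fin k → Fin n, LinearIndependent F (fun i => Mᵀ (γ i)) := by
  classical
  obtain ⟨b, hbsub, hbspan, hbind⟩ := exists_linearIndependent F (Set.range Mᵀ)
  have hbfin : b.Finite := (Set.finite_range Mᵀ).subset hbsub
  haveI := hbfin.fintype
  have hcard : Fintype.card b = k := by
    rw [← hk, Matrix.rank_eq_finrank_span_cols]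
    change Fintype.card b = finrank F (span F (Set.range Mᵀ))
    rw [← hbspan]
    rw [show Submodule.span F b = Submodule.span F (Set.range ((↑) : b → (Fin m → F))) by
      rw [Subtype.range_coe]]
    exact (finrank_span_eq_card hbind).symm
  let e : Fin k ≃ b := (Fintype.equivFinOfCardEq hcard).symm
  have hmem : ∀ i : Fin k, ((e i : Fin m → F)) ∈ Set.range Mᵀ := fun i => hbsub (e i).2
  choose γ hγ using hmem
  refine ⟨γ, ?_⟩
  have : (fun i => Mᵀ (γ i)) = (fun x : b => (x : Fin m → F)) ∘ e := funext fun i => hγ i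
  rw [this]
  exact hbind.comp e e.injective

/-- A matrix over a field has an invertible square submatrix whose size is its rank. -/
private lemma exists_minor {F : Type*} [Field F] {m n : ℕ}
    (M : Matrix (Fin m) (Fin n) F) {k : ℕ} (hk : M.rank = k) :
    ∃ (ρ : Fin k → Fin m) (γ : Fin k → Fin n), IsUnit (M.submatrix ρ γ) := by
  obtain ⟨γ, hγ⟩ := exists_indep_cols M hk
  have hγ' : LinearIndependent F ((M.submatrix id γ)ᵀ) := hγ
  have h1 : (M.submatrix id γ)ᵀ.rank = k := by
    have := hγ'.rank_matrix
    simp only [Fintype.card_fin] at this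
    exact this
  obtain ⟨ρ, hρ⟩ := exists_indep_cols (M.submatrix id γ)ᵀ h1
  have hρ' : LinearIndependent F (fun i => (M.submatrix ρ γ) i) := hρ
  exact ⟨ρ, γ, Matrix.linearIndependent_rows_iff_isUnit.mp hρ'⟩

/-- A nonzero `k × k` minor gives a rank lower bound, over a field. -/
private lemma rank_ge_of_minor {K : Type*} [Field K] {m n k : ℕ}
    (M : Matrix (Fin m) (Fin n) K) (ρ : Fin k → Fin m) (γ : Fin k → Fin n)
    (h : (M.submatrix ρ γ).det ≠ 0) : k ≤ M.rank := by
  classical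
  have hU : IsUnit (M.submatrix ρ γ) :=
    (Matrix.isUnit_iff_isUnit_det _).mpr (isUnit_iff_ne_zero.mpr h)
  have h1 : (M.submatrix ρ γ).rank = k := by
    simpa using Matrix.rank_of_isUnit _ hU
  have decomp : M.submatrix ρ γ =
      ((1 : Matrix (Fin m) (Fin m) K).submatrix ρ (Equiv.refl (Fin m))) * M *
        ((1 : Matrix (Fin n) (Fin n) K).submatrix (Equiv.refl (Fin n)) γ) := by
    rw [Matrix.one_submatrix_mul, Matrix.mul_submatrix_one]
    simp
  calc k = (M.submatrix ρ γ).rank := h1.symm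
    _ ≤ _ := by
        rw [decomp]
        exact le_trans (Matrix.rank_mul_le_left _ _) (Matrix.rank_mul_le_right _ _)

/-- If a matrix over `R` is pushed into two fields, one along an arbitrary hom `g` and one
along an injective hom `ι`, then the rank of the `g`-image is at most that of the `ι`-image. -/
private lemma rank_map_le_rank_map {R F K : Type*} [CommRing R] [Field F] [Field K]
    (g : R →+* F) (ι : R →+* K) (hι : Function.Injective ι) {m n : ℕ}
    (N : Matrix (Fin m) (Fin n) R) : (N.map g).rank ≤ (N.map ι).rank := by
  obtain ⟨ρ, γ, hU⟩ := exists_minor (N.map g) rfl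
  have hsub : (N.map g).submatrix ρ γ = (N.submatrix ρ γ).map g := by
    ext i j; simp [Matrix.submatrix_apply, Matrix.map_apply]
  have hdetg : g (N.submatrix ρ γ).det ≠ 0 := by
    rw [RingHom.map_det, RingHom.mapMatrix_apply]
    rw [hsub] at hU
    exact ((Matrix.isUnit_iff_isUnit_det _).mp hU).ne_zero
  have hdet : (N.submatrix ρ γ).det ≠ 0 := fun h0 => hdetg (by rw [h0, map_zero])
  have hdetι : ((N.map ι).submatrix ρ γ).det ≠ 0 := by
    have : (N.map ι).submatrix ρ γ = (N.submatrix ρ γ).map ι := by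
      ext i j; simp [Matrix.submatrix_apply, Matrix.map_apply]
    rw [this]
    have hd : ((N.submatrix ρ γ).map ι).det = ι (N.submatrix ρ γ).det := by
      rw [RingHom.map_det, RingHom.mapMatrix_apply]
    rw [hd]
    intro h
    exact hdet (hι (by simpa using h))
  exact rank_ge_of_minor _ ρ γ hdetι

/-- Over a domain, the rank of a matrix does not exceed its rank over the fraction field. -/
private lemma rank_le_rank_fractionField {Q : Type*} [CommRing Q] [IsDomain Q] {m n : ℕ}
    (A : Matrix (Fin m) (Fin n) Q) :
    A.rank ≤ (A.map (algebraMap Q (FractionRing Q))).rank := by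
  classical
  set F := FractionRing Q
  set fQ := algebraMap Q F
  rw [Matrix.rank]
  apply finrank_le_of_rank_le
  apply _root_.rank_le
  intro s hs
  let φ : (Fin m → Q) →ₗ[Q] (Fin m → F) :=
    LinearMap.pi fun i => (Algebra.linearMap Q F).comp (LinearMap.proj i)
  have hφinj : Function.Injective φ := by
    intro x y hxy
    funext i
    exact IsFractionRing.injective Q F (congrFun hxy i)
  let ψ : ↥(LinearMap.range A.mulVecLin) →ₗ[Q] (Fin m → F) :=
    φ.comp (LinearMap.range A.mulVecLin).subtype
  have hψinj : Function.Injective ψ :=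
    hφinj.comp (Subtype.val_injective)
  have hindQ : LinearIndependent Q (fun x : s => ψ x) :=
    hs.map' ψ (LinearMap.ker_eq_bot.mpr hψinj)
  have hindF : LinearIndependent F (fun x : s => ψ x) :=
    (LinearIndependent.iff_fractionRing Q F).mp hindQ
  have hmem : ∀ x : s, ψ x ∈ LinearMap.range (A.map fQ).mulVecLin := by
    rintro ⟨⟨v, hv⟩, hx⟩
    obtain ⟨y, hy⟩ := hv
    refine ⟨fQ ∘ y, ?_⟩
    simp only [Matrix.mulVecLin_apply] at hy ⊢
    funext i
    have := (RingHom.map_mulVec fQ A y i).symm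
    simp only [ψ, φ]
    rw [this, hy]
    rfl
  let f2 : s → ↥(LinearMap.range (A.map fQ).mulVecLin) := fun x => ⟨ψ x, hmem x⟩
  have hindF2 : LinearIndependent F f2 := by
    apply LinearIndependent.of_comp (LinearMap.range (A.map fQ).mulVecLin).subtype
    exact hindF
  have := hindF2.fintype_card_le_finrank
  simpa [Matrix.rank] using this

/-- Combined inequality: push a matrix over `R` down along `π` into a domain `Q`,
or embed it along an injective `ι` into a field `K`; the first rank is at most the second. -/
private lemma main_rank_ineq {R Q K : Type*} [CommRing R] [CommRing Q] [IsDomain Q] [Field K]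
    (π : R →+* Q) (ι : R →+* K) (hι : Function.Injective ι) {m n : ℕ}
    (N : Matrix (Fin m) (Fin n) R) : (N.map π).rank ≤ (N.map ι).rank := by
  calc (N.map π).rank
      ≤ ((N.map π).map (algebraMap Q (FractionRing Q))).rank :=
        rank_le_rank_fractionField _
    _ = (N.map (((algebraMap Q (FractionRing Q)).comp π : R →+* FractionRing Q) :
          R → FractionRing Q)).rank := by rw [Matrix.map_map, RingHom.coe_comp]
    _ ≤ (N.map ι).rank :=
        rank_map_le_rank_map ((algebraMap Q (FractionRing Q)).comp π) ι hι N

/-- `ω = exp(2πi/3)`, a primitive cube root of unity. -/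
noncomputable def ω : ℂ := Complex.exp (2 * Real.pi * Complex.I / 3)

/-- The ring of Eisenstein integers `E = ℤ[ω]`, as a subring of `ℂ`. -/
noncomputable def Eisenstein : Subring ℂ := Subring.closure {ω}

set_option maxHeartbeats 1000000 in
set_option synthInstance.maxHeartbeats 200000 in
/-- Let `Θ` be a prime of the Eisenstein integers `E`, `π : E → E/(Θ)` the quotient map
and `s : E/(Θ) → E` any section of `π`, applied entrywise to matrices. Then for any
matrices `X, Y` over `E/(Θ)` we have `rank_ℂ(s(X) - s(Y)) ≥ rank_{E/(Θ)}(X - Y)`.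
In particular, if `𝒞` is a rank-metric code of minimum rank distance `d` over `E/(Θ)`,
any two distinct matrices in `s(𝒞) ⊆ ℂ^{m×n}` have rank distance at least `d` over `ℂ`. -/
theorem section_is_rank_distance_preserving (m n : ℕ) (Θ : Eisenstein) (hΘ : Prime Θ)
    (s : Eisenstein ⧸ Ideal.span {Θ} → Eisenstein)
    (hs : ∀ x, Ideal.Quotient.mk (Ideal.span {Θ}) (s x) = x) :
    (∀ X Y : Matrix (Fin m) (Fin n) (Eisenstein ⧸ Ideal.span {Θ}),
      (X - Y).rank ≤
        ((X.map fun x => (s x : ℂ)) - (Y.map fun x => (s x : ℂ))).rank)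
    ∧ ∀ (C : Set (Matrix (Fin m) (Fin n) (Eisenstein ⧸ Ideal.span {Θ}))) (d : ℕ),
        (∀ X ∈ C, ∀ Y ∈ C, X ≠ Y → d ≤ (X - Y).rank) →
        ∀ X ∈ C, ∀ Y ∈ C, X ≠ Y →
          d ≤ ((X.map fun x => (s x : ℂ)) - (Y.map fun x => (s x : ℂ))).rank := by
  haveI hprime : (Ideal.span {Θ}).IsPrime :=
    (Ideal.span_singleton_prime hΘ.ne_zero).mpr hΘ
  have key : ∀ X Y : Matrix (Fin m) (Fin n) (Eisenstein ⧸ Ideal.span {Θ}),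
      (X - Y).rank ≤
        ((X.map fun x => (s x : ℂ)) - (Y.map fun x => (s x : ℂ))).rank := by
    intro X Y
    let π : Eisenstein →+* Eisenstein ⧸ Ideal.span {Θ} := Ideal.Quotient.mk (Ideal.span {Θ})
    let N' : Matrix (Fin m) (Fin n) Eisenstein :=
      Matrix.of fun i j => s (X i j) - s (Y i j)
    have h1 : X - Y = N'.map π := by
      ext i j
      show X i j - Y i j = π (s (X i j) - s (Y i j))
      rw [map_sub, hs, hs]
    have h2 : (X.map fun x => (s x : ℂ)) - (Y.map fun x => (s x : ℂ))
        = N'.map Eisenstein.subtype := by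
      ext i j
      simp [N', Matrix.map_apply, Matrix.sub_apply]
    rw [h1, h2]
    exact main_rank_ineq π Eisenstein.subtype Eisenstein.subtype_injective N'
  refine ⟨key, ?_⟩
  intro C d hC X hX Y hY hXY
  exact le_trans (hC X hX Y hY hXY) (key X Y)
end

section
/- Let q be a prime power, let F_q ⊆ F be finite fields with [F : F_q] = m, let 1 ≤ k < n ≤ m, and let g_1, …, g_n ∈ F be linearly independent over F_q. Let L(x) = Σ_{i=0}^{k−1} c_i x^{q^i} with coefficients c_i ∈ F not all zero. Then the F_q-dimension of the F_q-span of the values {L(g_1), …, L(g_n)} is at least n − k + 1. Consequently, the Gabidulin code {(f(g_1), …, f(g_n)) : f a linearized polynomial over F of q-degree < k} has minimum rank distance d = n − k + 1 at least n − k + 1 (the rank of a codeword vector being the F_q-dimension of the span of its entries). -/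
/-- Let `F_q ⊆ F` be finite fields with `[F : F_q] = m`, `1 ≤ k < n ≤ m`, and let
`g_1, …, g_n ∈ F` be linearly independent over `F_q`. For any nonzero linearized
polynomial `L(x) = Σ_{i<k} c_i x^{q^i}`, the `F_q`-dimension of the span of the values
`L(g_1), …, L(g_n)` is at least `n − k + 1`. Consequently, the Gabidulin code
`{(f(g_1), …, f(g_n))}` has minimum rank distance at least `n − k + 1`, the rank of a
vector being the `F_q`-dimension of the span of its entries. -/
theorem gabidulin_minimum_rank_distance
    {Fq F : Type*} [Field Fq] [Fintype Fq] [Field F] [Fintype F] [Algebra Fq F]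
    (q m n k : ℕ) (hq : IsPrimePow q) (hcard : Fintype.card Fq = q)
    (hm : Module.finrank Fq F = m) (hk : 1 ≤ k) (hkn : k < n) (hnm : n ≤ m)
    (g : Fin n → F) (hg : LinearIndependent Fq g) :
    (∀ c : Fin k → F, c ≠ 0 →
      n - k + 1 ≤ Module.finrank Fq
        (Submodule.span Fq (Set.range fun j : Fin n => ∑ i : Fin k, c i * g j ^ q ^ (i : ℕ))))
    ∧ ∀ c₁ c₂ : Fin k → F, c₁ ≠ c₂ →
        n - k + 1 ≤ Module.finrank Fq
          (Submodule.span Fq (Set.range fun j : Fin n =>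
            (∑ i : Fin k, c₁ i * g j ^ q ^ (i : ℕ)) -
              ∑ i : Fin k, c₂ i * g j ^ q ^ (i : ℕ))) := by
  classical
  have hq2 : 2 ≤ q := hq.two_le
  set p := ringChar Fq with hpdef
  haveI hCFq : CharP Fq p := ringChar.charP Fq
  haveI hFp : Fact p.Prime := ⟨CharP.char_is_prime Fq p⟩
  haveI : CharP F p := charP_of_injective_algebraMap (algebraMap Fq F).injective p
  obtain ⟨s, -, hqs⟩ := FiniteField.card Fq p
  rw [hcard] at hqs
  -- Frobenius-type identities
  have hadd : ∀ (i : ℕ) (x y : F), (x + y) ^ q ^ i = x ^ q ^ i + y ^ q ^ i := by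
    intro i x y
    have h : q ^ i = p ^ ((s : ℕ) * i) := by rw [hqs, pow_mul]
    rw [h, add_pow_char_pow]
  have hsmul : ∀ (i : ℕ) (a : Fq) (x : F), (a • x) ^ q ^ i = a • x ^ q ^ i := by
    intro i a x
    rw [Algebra.smul_def, Algebra.smul_def, mul_pow, ← map_pow, ← hcard,
      FiniteField.pow_card_pow]
  have key : ∀ c : Fin k → F, c ≠ 0 →
      n - k + 1 ≤ Module.finrank Fq
        (Submodule.span Fq (Set.range fun j : Fin n =>
          ∑ i : Fin k, c i * g j ^ q ^ (i : ℕ))) := by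
    intro c hc
    set φ : F →ₗ[Fq] F :=
      { toFun := fun x => ∑ i : Fin k, c i * x ^ q ^ (i : ℕ)
        map_add' := by
          intro x y
          simp [hadd, mul_add, Finset.sum_add_distrib]
        map_smul' := by
          intro a x
          simp [hsmul, Finset.smul_sum, mul_smul_comm] } with hφ
    -- the associated polynomial
    set P : Polynomial F := ∑ i : Fin k, Polynomial.C (c i) * Polynomial.X ^ q ^ (i : ℕ)
      with hP
    have hPeval : ∀ x : F, P.eval x = φ x := by
      intro x
      simp [hP, hφ, Polynomial.eval_finset_sum]
    have hqinj : Function.Injective fun i : ℕ => q ^ i :=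
      Nat.pow_right_injective hq2
    obtain ⟨i0, hi0⟩ : ∃ i, c i ≠ 0 := by
      by_contra h; push_neg at h; exact hc (funext h)
    have hcoeff : P.coeff (q ^ (i0 : ℕ)) = c i0 := by
      simp only [hP, Polynomial.finset_sum_coeff, Polynomial.coeff_C_mul,
        Polynomial.coeff_X_pow]
      rw [Finset.sum_eq_single i0]
      · simp
      · intro b _ hb
        rw [if_neg, mul_zero]
        exact fun h => hb (Fin.ext (hqinj h)).symm
      · simp
    have hP0 : P ≠ 0 := fun h => hi0 (by rw [← hcoeff, h, Polynomial.coeff_zero])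
    have hdeg : P.natDegree ≤ q ^ (k - 1) := by
      refine Polynomial.natDegree_sum_le_of_forall_le _ _ ?_
      intro i _
      refine (Polynomial.natDegree_C_mul_le _ _).trans ?_
      rw [Polynomial.natDegree_X_pow]
      exact Nat.pow_le_pow_right (by omega) (by omega)
    -- kernel cardinality bound
    have hmem : ∀ x : LinearMap.ker φ, (x : F) ∈ P.roots.toFinset := by
      intro x
      rw [Multiset.mem_toFinset, Polynomial.mem_roots hP0]
      exact (hPeval x).trans x.2
    have hcardker : Fintype.card (LinearMap.ker φ) ≤ q ^ (k - 1) := by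
      calc Fintype.card (LinearMap.ker φ)
          ≤ Fintype.card P.roots.toFinset :=
            Fintype.card_le_of_injective (fun x => ⟨(x : F), hmem x⟩)
              (fun a b h => Subtype.ext (Subtype.mk_eq_mk.mp h))
        _ = P.roots.toFinset.card := Fintype.card_coe _
        _ ≤ Multiset.card P.roots := Multiset.toFinset_card_le _
        _ ≤ P.natDegree := Polynomial.card_roots' P
        _ ≤ q ^ (k - 1) := hdeg
    have hkerdim : Module.finrank Fq (LinearMap.ker φ) ≤ k - 1 := by
      have h1 : Fintype.card (LinearMap.ker φ)
          = q ^ Module.finrank Fq (LinearMap.ker φ) := by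
        rw [← hcard]; exact Module.card_eq_pow_finrank
      rw [h1] at hcardker
      exact (Nat.pow_le_pow_iff_right hq2).mp hcardker
    -- rank-nullity on the span of the g's
    set V : Submodule Fq F := Submodule.span Fq (Set.range g) with hV
    have hVdim : Module.finrank Fq V = n := by
      rw [finrank_span_eq_card hg, Fintype.card_fin]
    have hspan : Submodule.span Fq (Set.range fun j : Fin n =>
        ∑ i : Fin k, c i * g j ^ q ^ (i : ℕ)) = Submodule.map φ V := by
      rw [hV, Submodule.map_span, ← Set.range_comp]
      rfl
    have hrn := LinearMap.finrank_range_add_finrank_ker (φ.domRestrict V)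
    rw [LinearMap.range_domRestrict, hVdim] at hrn
    have hkd : Module.finrank Fq (LinearMap.ker (φ.domRestrict V)) ≤ k - 1 := by
      refine le_trans (LinearMap.finrank_le_finrank_of_injective
        (f := LinearMap.codRestrict (LinearMap.ker φ)
          (V.subtype ∘ₗ (LinearMap.ker (φ.domRestrict V)).subtype) ?_) ?_) hkerdim
      · intro x
        have hx : (φ.domRestrict V) ↑x = 0 := LinearMap.mem_ker.mp x.2
        rw [LinearMap.domRestrict_apply] at hx
        simpa using hx
      · intro a b h
        have h1 : ((a : V) : F) = ((b : V) : F) := by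
          simpa [LinearMap.codRestrict_apply] using congrArg Subtype.val h
        exact Subtype.ext (Subtype.ext h1)
    rw [hspan]
    omega
  refine ⟨key, ?_⟩
  intro c₁ c₂ hne
  have h := key (c₁ - c₂) (sub_ne_zero_of_ne hne)
  have hfun : (fun j : Fin n => (∑ i : Fin k, c₁ i * g j ^ q ^ (i : ℕ)) -
      ∑ i : Fin k, c₂ i * g j ^ q ^ (i : ℕ))
      = fun j : Fin n => ∑ i : Fin k, (c₁ - c₂) i * g j ^ q ^ (i : ℕ) := by
    funext j
    rw [← Finset.sum_sub_distrib]
    exact Finset.sum_congr rfl fun i _ => (sub_mul _ _ _).symm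
  rw [hfun]
  exact h
end

section
/- Let q be a prime power, let F_q ⊆ F be finite fields with [F : F_q] = m, let 1 ≤ k ≤ n ≤ m, and let g_1, …, g_n ∈ F be linearly independent over F_q. Then the evaluation map sending a coefficient vector (c_0, …, c_{k−1}) ∈ F^k to the value vector (Σ_{i=0}^{k−1} c_i g_1^{q^i}, …, Σ_{i=0}^{k−1} c_i g_n^{q^i}) ∈ F^n is injective. In particular, the Gabidulin code of length n and dimension k over F has exactly q^{mk} codewords. -/
open Polynomial

/-- Let `F_q ⊆ F` be finite fields with `[F : F_q] = m`, `1 ≤ k ≤ n ≤ m`, and let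
`g_1, …, g_n ∈ F` be linearly independent over `F_q`. Then the evaluation map sending a
coefficient vector `(c_0, …, c_{k−1}) ∈ F^k` to `(Σ_i c_i g_1^{q^i}, …, Σ_i c_i g_n^{q^i})`
is injective; in particular the Gabidulin code of length `n` and dimension `k` has
exactly `q^{mk}` codewords. -/
theorem gabidulin_evaluation_injective_and_card
    {Fq F : Type*} [Field Fq] [Fintype Fq] [Field F] [Fintype F] [Algebra Fq F]
    (q m n k : ℕ) (hq : IsPrimePow q) (hcard : Fintype.card Fq = q)
    (hm : Module.finrank Fq F = m) (hk : 1 ≤ k) (hkn : k ≤ n) (hnm : n ≤ m)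
    (g : Fin n → F) (hg : LinearIndependent Fq g) :
    Function.Injective
      (fun c : Fin k → F => fun j : Fin n => ∑ i : Fin k, c i * g j ^ q ^ (i : ℕ))
    ∧ Nat.card {v : Fin n → F //
        ∃ c : Fin k → F, v = fun j : Fin n => ∑ i : Fin k, c i * g j ^ q ^ (i : ℕ)} =
        q ^ (m * k) := by
  classical
  -- basic facts about the characteristic
  set p := ringChar Fq with hp
  haveI : CharP Fq p := ringChar.charP Fq
  obtain ⟨d, hpprime, hqd⟩ := FiniteField.card Fq p
  rw [hcard] at hqd
  haveI : Fact p.Prime := ⟨hpprime⟩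
  haveI : CharP F p := charP_of_injective_algebraMap (algebraMap Fq F).injective p
  have hq2 : 2 ≤ q := hcard ▸ Fintype.one_lt_card
  -- `q`-power maps are `Fq`-semilinear
  have hLC : ∀ (a : Fin n → Fq) (i : ℕ),
      (∑ j : Fin n, a j • g j) ^ q ^ i = ∑ j : Fin n, a j • (g j ^ q ^ i) := by
    intro a i
    have hq' : q ^ i = p ^ ((d : ℕ) * i) := by rw [pow_mul, ← hqd]
    rw [hq', sum_pow_char_pow]
    refine Finset.sum_congr rfl fun j _ => ?_
    rw [Algebra.smul_def, Algebra.smul_def, mul_pow, ← map_pow, ← hq',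
      show (a j) ^ q ^ i = a j from by rw [← hcard]; exact FiniteField.pow_card_pow i (a j)]
  -- key: a linearized polynomial of q-degree < k vanishing on all gⱼ is zero
  have key : ∀ c : Fin k → F,
      (∀ j : Fin n, ∑ i : Fin k, c i * g j ^ q ^ (i : ℕ) = 0) → c = 0 := by
    intro c hc
    by_contra hc0
    obtain ⟨i0, hi0⟩ : ∃ i : Fin k, c i ≠ 0 := by
      by_contra h
      push_neg at h
      exact hc0 (funext fun i => h i)
    set P : F[X] := ∑ i : Fin k, Polynomial.monomial (q ^ (i : ℕ)) (c i) with hP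
    have hPeval : ∀ x : F, P.eval x = ∑ i : Fin k, c i * x ^ q ^ (i : ℕ) := by
      intro x
      simp [hP, Polynomial.eval_finset_sum, Polynomial.eval_monomial]
    have hPne : P ≠ 0 := by
      intro h
      have hco : P.coeff (q ^ (i0 : ℕ)) = c i0 := by
        rw [hP, Polynomial.finset_sum_coeff]
        have h1 : ∀ i : Fin k,
            (Polynomial.monomial (q ^ (i : ℕ)) (c i)).coeff (q ^ (i0 : ℕ))
              = if i = i0 then c i else 0 := by
          intro i
          rw [Polynomial.coeff_monomial]
          congr 1
          simp only [eq_iff_iff]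
          constructor
          · intro h'
            exact Fin.ext (Nat.pow_right_injective hq2 h')
          · intro h'; rw [h']
        simp [h1]
      rw [h] at hco
      exact hi0 (by simpa using hco.symm)
    have hdeg : P.natDegree ≤ q ^ (k - 1) := by
      refine Polynomial.natDegree_sum_le_of_forall_le _ _ fun i _ => ?_
      refine le_trans (Polynomial.natDegree_monomial_le (c i)) ?_
      exact Nat.pow_le_pow_right (by omega) (by omega)
    -- build q^n roots
    set φ : (Fin n → Fq) → F := fun a => ∑ j : Fin n, a j • g j with hφ
    have hφinj : Function.Injective φ := by
      intro a b hab
      have hsum : ∑ j : Fin n, (a j - b j) • g j = 0 := by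
        simp only [sub_smul, Finset.sum_sub_distrib]
        simp only [hφ] at hab
        rw [hab, sub_self]
      have h2 := Fintype.linearIndependent_iff.mp hg _ hsum
      funext j
      exact sub_eq_zero.mp (h2 j)
    have hroot : ∀ a : Fin n → Fq, P.IsRoot (φ a) := by
      intro a
      rw [Polynomial.IsRoot, hPeval]
      have h3 : ∀ i : Fin k,
          c i * (φ a) ^ q ^ (i : ℕ) = ∑ j : Fin n, a j • (c i * g j ^ q ^ (i : ℕ)) := by
        intro i
        simp only [hφ]
        rw [hLC a (i : ℕ), Finset.mul_sum]
        exact Finset.sum_congr rfl fun j _ => mul_smul_comm _ _ _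
      rw [Finset.sum_congr rfl fun i _ => h3 i, Finset.sum_comm]
      simp only [← Finset.smul_sum]
      rw [Finset.sum_congr rfl fun j _ => by rw [hc j, smul_zero]]
      exact Finset.sum_const_zero
    have hsub : (Finset.univ.image φ) ⊆ P.roots.toFinset := by
      intro x hx
      obtain ⟨a, _, rfl⟩ := Finset.mem_image.mp hx
      rw [Multiset.mem_toFinset, Polynomial.mem_roots hPne]
      exact hroot a
    have hcards : q ^ n ≤ q ^ (k - 1) := by
      calc q ^ n = (Finset.univ.image φ).card := by
            rw [Finset.card_image_of_injective _ hφinj, Finset.card_univ,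
              Fintype.card_fun, hcard, Fintype.card_fin]
        _ ≤ P.roots.toFinset.card := Finset.card_le_card hsub
        _ ≤ Multiset.card P.roots := P.roots.toFinset_card_le
        _ ≤ P.natDegree := P.card_roots'
        _ ≤ q ^ (k - 1) := hdeg
    have : q ^ (k - 1) < q ^ n := Nat.pow_lt_pow_right (by omega) (by omega)
    omega
  have hinj : Function.Injective
      (fun c : Fin k → F => fun j : Fin n => ∑ i : Fin k, c i * g j ^ q ^ (i : ℕ)) := by
    intro c1 c2 h
    have h0 : ∀ j : Fin n, ∑ i : Fin k, (c1 i - c2 i) * g j ^ q ^ (i : ℕ) = 0 := by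
      intro j
      simp only [sub_mul, Finset.sum_sub_distrib]
      have := congrFun h j
      simp only at this
      rw [this, sub_self]
    have := key _ h0
    funext i
    have := congrFun this i
    simpa [sub_eq_zero] using this
  refine ⟨hinj, ?_⟩
  have hcF : Fintype.card F = q ^ m := by
    have := Module.card_eq_pow_finrank (K := Fq) (V := F)
    rwa [hcard, hm] at this
  have hbij : Function.Bijective
      (fun c : Fin k → F =>
        (⟨fun j : Fin n => ∑ i : Fin k, c i * g j ^ q ^ (i : ℕ), ⟨c, rfl⟩⟩ :
          {v : Fin n → F //
            ∃ c : Fin k → F, v = fun j : Fin n => ∑ i : Fin k, c i * g j ^ q ^ (i : ℕ)})) := by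
    constructor
    · intro c1 c2 h
      exact hinj (by simpa using congrArg Subtype.val h)
    · rintro ⟨v, c, rfl⟩
      exact ⟨c, rfl⟩
  rw [← Nat.card_eq_of_bijective _ hbij, Nat.card_eq_fintype_card, Fintype.card_fun,
    hcF, Fintype.card_fin, ← pow_mul]
end

section
/- Let F_q be the finite field with q elements and let n ≤ m. If 𝒞 ⊆ F_q^{m×n} is a rank-metric code such that any two distinct elements C₁, C₂ ∈ 𝒞 satisfy rank(C₁ − C₂) ≥ d (minimum rank distance at least d, with 1 ≤ d ≤ n), then |𝒞| ≤ q^{m(n−d+1)} (the rank-metric Singleton bound). -/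
/-- Rank-metric Singleton bound: if `𝒞 ⊆ F_q^{m×n}` (with `n ≤ m`, `1 ≤ d ≤ n`) is a
rank-metric code such that any two distinct codewords `C₁, C₂` satisfy
`rank(C₁ − C₂) ≥ d`, then `|𝒞| ≤ q^{m(n−d+1)}`. -/
theorem rank_metric_singleton_bound
    {Fq : Type*} [Field Fq] [Fintype Fq]
    (q m n d : ℕ) (hcard : Fintype.card Fq = q)
    (hnm : n ≤ m) (hd1 : 1 ≤ d) (hdn : d ≤ n)
    (C : Set (Matrix (Fin m) (Fin n) Fq))
    (hC : ∀ X ∈ C, ∀ Y ∈ C, X ≠ Y → d ≤ (X - Y).rank) :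
    Nat.card C ≤ q ^ (m * (n - d + 1)) := by
  classical
  set k := n - d + 1 with hk
  have hkn : k ≤ n := by omega
  -- restriction to the first k columns
  let f : Matrix (Fin m) (Fin n) Fq → Matrix (Fin m) (Fin k) Fq :=
    fun X => X.submatrix id (Fin.castLE hkn)
  have hinj : Function.Injective (fun x : C => f x) := by
    rintro ⟨X, hX⟩ ⟨Y, hY⟩ hfXY
    simp only [Subtype.mk.injEq]
    by_contra hne
    have hrank := hC X hX Y hY hne
    set D := X - Y with hD
    have hDcol : ∀ j : Fin n, (j : ℕ) < k → ∀ i, D i j = 0 := by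
      intro j hj i
      have h1 := congrFun (congrFun hfXY i) ⟨(j : ℕ), hj⟩
      have h2 : Fin.castLE hkn ⟨(j : ℕ), hj⟩ = j := by ext; rfl
      simp only [f, Matrix.submatrix_apply, id_eq, h2] at h1
      simp [hD, Matrix.sub_apply, h1]
    -- factor D through a matrix with d-1 columns
    let e : Fin (d - 1) → Fin n := fun t => ⟨k + (t : ℕ), by omega⟩
    let B : Matrix (Fin m) (Fin (d - 1)) Fq := D.submatrix id e
    let M : Matrix (Fin (d - 1)) (Fin n) Fq :=
      fun t j => if (k + (t : ℕ) = (j : ℕ)) then 1 else 0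
    have hfac : D = B * M := by
      ext i j
      rw [Matrix.mul_apply]
      by_cases hj : (j : ℕ) < k
      · rw [hDcol j hj i]
        symm
        apply Finset.sum_eq_zero
        intro t _
        have : ¬ (k + (t : ℕ) = (j : ℕ)) := by omega
        simp [M, this]
      · push_neg at hj
        have hjn : (j : ℕ) - k < d - 1 := by omega
        rw [Finset.sum_eq_single ⟨(j : ℕ) - k, hjn⟩]
        · have he : e ⟨(j : ℕ) - k, hjn⟩ = j := by
            ext; simp [e]; omega
          have hm : k + ((j : ℕ) - k) = (j : ℕ) := by omega
          simp [B, M, he, hm]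
        · intro t _ ht
          have : ¬ (k + (t : ℕ) = (j : ℕ)) := by
            intro h
            apply ht
            ext
            simp
            omega
          simp [M, this]
        · intro h
          exact absurd (Finset.mem_univ _) h
    have hle : D.rank ≤ d - 1 := by
      calc D.rank = (B * M).rank := by rw [hfac]
        _ ≤ B.rank := Matrix.rank_mul_le_left B M
        _ ≤ Fintype.card (Fin (d - 1)) := Matrix.rank_le_card_width B
        _ = d - 1 := Fintype.card_fin _
    omega
  have hcardle := Nat.card_le_card_of_injective _ hinj
  refine hcardle.trans (le_of_eq ?_)
  rw [Nat.card_eq_fintype_card]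
  show Fintype.card (Fin m → Fin k → Fq) = q ^ (m * k)
  simp [Fintype.card_fun, hcard, pow_mul, mul_comm m k]
end

section
/- Let F_q be a finite field and let 𝒞 ⊆ F_q^{m×n} be a rank-metric code of minimum rank distance d. Fix matrices A_R ∈ F_q^{m×ρ} and B_C ∈ F_q^{δ×n}, and let τ be a nonnegative integer with 2τ + ρ + δ < d. Suppose C₁, C₂ ∈ 𝒞 and there exist matrices B_R^{(1)}, B_R^{(2)} ∈ F_q^{ρ×n}, A_C^{(1)}, A_C^{(2)} ∈ F_q^{m×δ}, and E₁, E₂ ∈ F_q^{m×n} with rank(E₁) ≤ τ and rank(E₂) ≤ τ, such that C₁ + E₁ + A_R·B_R^{(1)} + A_C^{(1)}·B_C = C₂ + E₂ + A_R·B_R^{(2)} + A_C^{(2)}·B_C. Then C₁ = C₂. (This is the uniqueness underlying error-and-erasure decoding of rank-metric codes under the condition 2τ + ρ + δ < d.) -/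
lemma matrix_rank_neg {Fq : Type*} [Field Fq] {m n : ℕ}
    (A : Matrix (Fin m) (Fin n) Fq) : (-A).rank = A.rank := by
  have h : (-A).mulVecLin = -A.mulVecLin := by
    ext v i
    simp [Matrix.mulVec, dotProduct, Pi.single_apply, mul_ite]
  rw [Matrix.rank, Matrix.rank, h, LinearMap.range_neg]

lemma matrix_rank_add_le {Fq : Type*} [Field Fq] {m n : ℕ}
    (A B : Matrix (Fin m) (Fin n) Fq) : (A + B).rank ≤ A.rank + B.rank := by
  have h : LinearMap.range (A + B).mulVecLin ≤
      LinearMap.range A.mulVecLin ⊔ LinearMap.range B.mulVecLin := by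
    rintro x ⟨v, rfl⟩
    exact Submodule.mem_sup.2 ⟨A.mulVecLin v, ⟨v, rfl⟩, B.mulVecLin v, ⟨v, rfl⟩, by
      simp [Matrix.mulVecLin_add]⟩
  calc (A + B).rank ≤ Module.finrank Fq
        ↥(LinearMap.range A.mulVecLin ⊔ LinearMap.range B.mulVecLin) :=
        Submodule.finrank_mono h
    _ ≤ A.rank + B.rank := Submodule.finrank_add_le_finrank_add_finrank _ _

/-- Uniqueness underlying error-and-erasure decoding of rank-metric codes: let `𝒞` be a
rank-metric code in `F_q^{m×n}` of minimum rank distance `d`, let `A_R ∈ F_q^{m×ρ}` and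
`B_C ∈ F_q^{δ×n}` be fixed, and let `τ` satisfy `2τ + ρ + δ < d`. If two codewords
`C₁, C₂`, corrupted by rank-`≤ τ` errors `E₁, E₂`, row erasures `A_R·B_R^{(i)}` and
column erasures `A_C^{(i)}·B_C`, yield the same received word, then `C₁ = C₂`. -/
theorem rank_metric_error_erasure_uniqueness
    {Fq : Type*} [Field Fq] (m n ρ δ τ d : ℕ)
    (C : Set (Matrix (Fin m) (Fin n) Fq))
    (hC : ∀ X ∈ C, ∀ Y ∈ C, X ≠ Y → d ≤ (X - Y).rank)
    (AR : Matrix (Fin m) (Fin ρ) Fq) (BC : Matrix (Fin δ) (Fin n) Fq)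
    (hcond : 2 * τ + ρ + δ < d)
    (C₁ C₂ : Matrix (Fin m) (Fin n) Fq) (hC₁ : C₁ ∈ C) (hC₂ : C₂ ∈ C)
    (BR₁ BR₂ : Matrix (Fin ρ) (Fin n) Fq) (AC₁ AC₂ : Matrix (Fin m) (Fin δ) Fq)
    (E₁ E₂ : Matrix (Fin m) (Fin n) Fq) (hE₁ : E₁.rank ≤ τ) (hE₂ : E₂.rank ≤ τ)
    (heq : C₁ + E₁ + AR * BR₁ + AC₁ * BC = C₂ + E₂ + AR * BR₂ + AC₂ * BC) :
    C₁ = C₂ := by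
  by_contra hne
  have hd := hC C₁ hC₁ C₂ hC₂ hne
  have hdiff : C₁ - C₂ = (E₂ - E₁) + AR * (BR₂ - BR₁) + (AC₂ - AC₁) * BC := by
    have : C₁ - C₂ = (C₂ + E₂ + AR * BR₂ + AC₂ * BC) - (C₂ + E₁ + AR * BR₁ + AC₁ * BC) := by
      rw [← heq]; abel
    rw [this, Matrix.mul_sub, Matrix.sub_mul]; abel
  have h1 : (E₂ - E₁).rank ≤ τ + τ := by
    have := matrix_rank_add_le E₂ (-E₁)
    rw [matrix_rank_neg] at this
    simpa [sub_eq_add_neg] using this.trans (add_le_add hE₂ hE₁)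
  have h2 : (AR * (BR₂ - BR₁)).rank ≤ ρ :=
    (Matrix.rank_mul_le_left _ _).trans (Matrix.rank_le_width AR)
  have h3 : ((AC₂ - AC₁) * BC).rank ≤ δ :=
    (Matrix.rank_mul_le_right _ _).trans (Matrix.rank_le_height BC)
  have : (C₁ - C₂).rank ≤ 2 * τ + ρ + δ := by
    rw [hdiff]
    calc ((E₂ - E₁) + AR * (BR₂ - BR₁) + (AC₂ - AC₁) * BC).rank
        ≤ ((E₂ - E₁) + AR * (BR₂ - BR₁)).rank + ((AC₂ - AC₁) * BC).rank :=
          matrix_rank_add_le _ _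
      _ ≤ (E₂ - E₁).rank + (AR * (BR₂ - BR₁)).rank + ((AC₂ - AC₁) * BC).rank := by
          gcongr; exact matrix_rank_add_le _ _
      _ ≤ (τ + τ) + ρ + δ := by gcongr
      _ = 2 * τ + ρ + δ := by ring
  omega
end
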